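/- The semi-dual objective is strictly concave in the potentials modulo constants: for each fixed θ ∈ (ℝ^d)^K, the function ω ↦ 𝓛̃(θ,ω) := Σ_k α_k ω_k - ∫ log(Σ_k α_k e^{ω_k} q_{θ_k}(y)) dQ(y) is strictly concave on the hyperplane {ω ∈ ℝ^K : ω_K = 0}; that is, for ω ≠ ω' with ω_K = ω'_K = 0 and t ∈ (0,1), 𝓛̃(θ, tω + (1-t)ω') > t 𝓛̃(θ,ω) + (1-t) 𝓛̃(θ,ω'). -/

import Mathlib

open MeasureTheory

/-- Gaussian density on `ℝ^d` with mean `μ` and covariance `σ² I_d`. -/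
noncomputable def gaussDen (d : ℕ) (σ : ℝ) (μ y : EuclideanSpace ℝ (Fin d)) : ℝ :=
  (2 * Real.pi * σ ^ 2) ^ (-(d : ℝ) / 2) * Real.exp (-‖y - μ‖ ^ 2 / (2 * σ ^ 2))

/-- The semi-dual objective `𝓛̃(θ, ω)`. -/
noncomputable def semiDual (K d : ℕ) (σ : ℝ) (α : Fin K → ℝ)
    (Q : Measure (EuclideanSpace ℝ (Fin d)))
    (θ : Fin K → EuclideanSpace ℝ (Fin d)) (ω : Fin K → ℝ) : ℝ :=
  ∑ k, α k * ω k -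
    ∫ y, Real.log (∑ k, α k * Real.exp (ω k) * gaussDen d σ (θ k) y) ∂Q

/-!
For fixed `y`, the integrand of `semiDual` is the log-sum-exp `ω ↦ log ∑ₖ cₖ e^{ωₖ}` with
positive weights `cₖ = αₖ q_{θₖ}(y)`. Writing `L = log ∑ₖ cₖ e^{ωₖ}`, the vector `(cₖ e^{ωₖ - L})ₖ`
sums to one, so strict convexity of `exp` applied coordinatewise shows that log-sum-exp is strictly
convex along every direction except `(1, …, 1)`, which the hyperplane `ω_K = 0` avoids.
Integrating over `Q` preserves strict convexity, integrability coming from the bounds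
`log (c_K) + ω_K ≤ log ∑ₖ cₖ e^{ωₖ} ≤ const` with `log q_θ(y)` quadratic in `y`.
The remaining term `∑ₖ αₖ ωₖ` is linear.
-/

theorem strictConvexOn_integral {E X : Type*} [AddCommMonoid E] [SMul ℝ E] [MeasurableSpace X]
    {μ : Measure X} [NeZero μ] {s : Set E} {f : E → X → ℝ}
    (hf : ∀ x, StrictConvexOn ℝ s (f · x)) (hint : ∀ v ∈ s, Integrable (f v) μ) :
    StrictConvexOn ℝ s (fun v => ∫ x, f v x ∂μ) := by
  obtain ⟨x₀⟩ := μ.nonempty_of_neZero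
  refine ⟨(hf x₀).1, fun v hv w hw hvw a b ha hb hab => ?_⟩
  have hvw_int := hint _ ((hf x₀).1 hv hw ha.le hb.le hab)
  have hcomb : Integrable (fun x => a * f v x + b * f w x) μ :=
    ((hint v hv).const_mul a).add ((hint w hw).const_mul b)
  have hgap : 0 < ∫ x, (a * f v x + b * f w x - f (a • v + b • w) x) ∂μ := by
    have hpt x : f (a • v + b • w) x < a * f v x + b * f w x := (hf x).2 hv hw hvw ha hb hab
    rw [integral_pos_iff_support_of_nonneg (fun x => (sub_pos.2 (hpt x)).le)
      (hcomb.sub hvw_int), Function.support_eq_univ (fun x => (sub_pos.2 (hpt x)).ne')]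
    simp [NeZero.ne μ]
  rw [integral_sub hcomb hvw_int, integral_add ((hint v hv).const_mul a)
    ((hint w hw).const_mul b), integral_const_mul, integral_const_mul] at hgap
  simp only [smul_eq_mul]
  linarith

noncomputable def logSumExp {ι : Type*} [Fintype ι] (c v : ι → ℝ) : ℝ :=
  Real.log (∑ i, c i * Real.exp (v i))

theorem sum_mul_exp_pos {ι : Type*} [Fintype ι] [Nonempty ι] {c : ι → ℝ} (hc : ∀ i, 0 < c i)
    (v : ι → ℝ) : 0 < ∑ i, c i * Real.exp (v i) :=
  Finset.sum_pos (fun i _ => mul_pos (hc i) (Real.exp_pos _)) Finset.univ_nonempty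

namespace logSumExp

variable {ι : Type*} [Fintype ι] {c : ι → ℝ}

theorem sum_mul_exp_sub [Nonempty ι] (hc : ∀ i, 0 < c i) (v : ι → ℝ) (r : ℝ) :
    ∑ i, c i * Real.exp (v i - r) = Real.exp (logSumExp c v - r) := by
  rw [Real.exp_sub, logSumExp, Real.exp_log (sum_mul_exp_pos hc v), Finset.sum_div]
  simp only [Real.exp_sub, mul_div_assoc]

theorem log_add_le (hc : ∀ i, 0 < c i) (v : ι → ℝ) (i : ι) :
    Real.log (c i) + v i ≤ logSumExp c v := by
  rw [← Real.log_exp (v i), ← Real.log_mul (hc i).ne' (Real.exp_pos _).ne']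
  exact Real.log_le_log (mul_pos (hc i) (Real.exp_pos _))
    (Finset.single_le_sum (f := fun i => c i * Real.exp (v i))
      (fun j _ => (mul_pos (hc j) (Real.exp_pos _)).le) (Finset.mem_univ i))

theorem mono [Nonempty ι] {c' : ι → ℝ} (hc : ∀ i, 0 < c i) (hcc' : c ≤ c') (v : ι → ℝ) :
    logSumExp c v ≤ logSumExp c' v :=
  Real.log_le_log (sum_mul_exp_pos hc v) (Finset.sum_le_sum fun i _ =>
    mul_le_mul_of_nonneg_right (hcc' i) (Real.exp_pos _).le)

end logSumExp

theorem strictConvexOn_logSumExp {ι : Type*} [Fintype ι] {c : ι → ℝ} (hc : ∀ i, 0 < c i)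
    (i₀ : ι) : StrictConvexOn ℝ {v : ι → ℝ | v i₀ = 0} (logSumExp c) := by
  have : Nonempty ι := ⟨i₀⟩
  refine ⟨convex_hyperplane (LinearMap.proj i₀ : (ι → ℝ) →ₗ[ℝ] ℝ).isLinear 0,
    fun v hv w hw hvw a b ha hb hab => ?_⟩
  set L := logSumExp c
  have hexp i : Real.exp (a * (v i - L v) + b * (w i - L w))
      ≤ a * Real.exp (v i - L v) + b * Real.exp (w i - L w) :=
    convexOn_exp.2 trivial trivial ha.le hb.le hab
  obtain ⟨j, hj⟩ : ∃ j, v j - L v ≠ w j - L w := by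
    by_contra! h
    have hL : L v = L w := by linarith [h i₀, show v i₀ = 0 from hv, show w i₀ = 0 from hw]
    exact hvw (funext fun i => by linarith [h i])
  have hexp_lt : Real.exp (a * (v j - L v) + b * (w j - L w))
      < a * Real.exp (v j - L v) + b * Real.exp (w j - L w) :=
    strictConvexOn_exp.2 trivial trivial hj ha hb hab
  have hlt : Real.exp (L (a • v + b • w) - (a * L v + b * L w)) < 1 :=
    calc Real.exp (L (a • v + b • w) - (a * L v + b * L w))
        = ∑ i, c i * Real.exp (a * (v i - L v) + b * (w i - L w)) := by
          rw [← logSumExp.sum_mul_exp_sub hc]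
          congr! 3 with i
          simp only [Pi.add_apply, Pi.smul_apply, smul_eq_mul]
          ring
      _ < ∑ i, c i * (a * Real.exp (v i - L v) + b * Real.exp (w i - L w)) :=
          Finset.sum_lt_sum (fun i _ => mul_le_mul_of_nonneg_left (hexp i) (hc i).le)
            ⟨j, Finset.mem_univ j, mul_lt_mul_of_pos_left hexp_lt (hc j)⟩
      _ = a * ∑ i, c i * Real.exp (v i - L v) + b * ∑ i, c i * Real.exp (w i - L w) := by
          rw [Finset.mul_sum, Finset.mul_sum, ← Finset.sum_add_distrib]
          exact Finset.sum_congr rfl fun i _ => by ring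
      _ = 1 := by simp only [L, logSumExp.sum_mul_exp_sub hc, sub_self, Real.exp_zero]; linarith
  simp only [smul_eq_mul]
  linarith [Real.exp_lt_one_iff.1 hlt]

section Gaussian

variable {d : ℕ} {σ : ℝ}

theorem gaussDen_pos (hσ : σ ≠ 0) (μ y : EuclideanSpace ℝ (Fin d)) : 0 < gaussDen d σ μ y := by
  unfold gaussDen
  positivity

theorem gaussDen_le (μ y : EuclideanSpace ℝ (Fin d)) :
    gaussDen d σ μ y ≤ (2 * Real.pi * σ ^ 2) ^ (-(d : ℝ) / 2) := by
  unfold gaussDen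
  refine mul_le_of_le_one_right (by positivity) (Real.exp_le_one_iff.2 ?_)
  exact div_nonpos_of_nonpos_of_nonneg (neg_nonpos.2 (by positivity)) (by positivity)

theorem continuous_gaussDen (μ : EuclideanSpace ℝ (Fin d)) : Continuous (gaussDen d σ μ) := by
  unfold gaussDen
  fun_prop

theorem log_gaussDen (hσ : σ ≠ 0) (μ y : EuclideanSpace ℝ (Fin d)) :
    Real.log (gaussDen d σ μ y)
      = Real.log ((2 * Real.pi * σ ^ 2) ^ (-(d : ℝ) / 2)) - ‖y - μ‖ ^ 2 / (2 * σ ^ 2) := by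
  unfold gaussDen
  rw [Real.log_mul (by positivity) (Real.exp_pos _).ne', Real.log_exp]
  ring

end Gaussian

theorem integrable_norm_sub_sq {E : Type*} [NormedAddCommGroup E] [MeasurableSpace E]
    [OpensMeasurableSpace E] [SecondCountableTopology E] {μ : Measure E} [IsFiniteMeasure μ]
    (hμ : Integrable (fun x => ‖x‖ ^ 2) μ) (a : E) :
    Integrable (fun x => ‖x - a‖ ^ 2) μ :=
  (((memLp_two_iff_integrable_sq_norm aestronglyMeasurable_id).2 hμ).sub
    (memLp_const a)).integrable_norm_pow two_ne_zero

theorem integrable_logSumExp_gaussDen {K d : ℕ} {σ : ℝ} (hσ : σ ≠ 0) {α : Fin K → ℝ}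
    (hα : ∀ k, 0 < α k) {Q : Measure (EuclideanSpace ℝ (Fin d))} [IsFiniteMeasure Q]
    (hQ : Integrable (fun y => ‖y‖ ^ 2) Q) (θ : Fin K → EuclideanSpace ℝ (Fin d))
    (ω : Fin K → ℝ) (k₀ : Fin K) :
    Integrable (fun y => logSumExp (fun k => α k * gaussDen d σ (θ k) y) ω) Q := by
  have : Nonempty (Fin K) := ⟨k₀⟩
  have hc y k : 0 < α k * gaussDen d σ (θ k) y := mul_pos (hα k) (gaussDen_pos hσ _ _)
  have hmeas : Measurable fun y => logSumExp (fun k => α k * gaussDen d σ (θ k) y) ω := by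
    unfold logSumExp
    have := fun k => continuous_gaussDen (σ := σ) (θ k)
    fun_prop
  have hlower y : Real.log (α k₀) + Real.log (gaussDen d σ (θ k₀) y) + ω k₀
      ≤ logSumExp (fun k => α k * gaussDen d σ (θ k) y) ω := by
    rw [← Real.log_mul (hα k₀).ne' (gaussDen_pos hσ _ _).ne']
    exact logSumExp.log_add_le (hc y) ω k₀
  have hupper y : logSumExp (fun k => α k * gaussDen d σ (θ k) y) ω
      ≤ logSumExp (fun k => α k * (2 * Real.pi * σ ^ 2) ^ (-(d : ℝ) / 2)) ω :=
    logSumExp.mono (hc y) (fun k => mul_le_mul_of_nonneg_left (gaussDen_le _ _) (hα k).le) ω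
  have hlower_int :
      Integrable (fun y => Real.log (α k₀) + Real.log (gaussDen d σ (θ k₀) y) + ω k₀) Q := by
    simp only [log_gaussDen hσ]
    exact ((integrable_const _).add ((integrable_const _).sub
      ((integrable_norm_sub_sq hQ (θ k₀)).div_const _))).add (integrable_const _)
  exact integrable_of_le_of_le hmeas.aestronglyMeasurable (ae_of_all _ hlower)
    (ae_of_all _ hupper) hlower_int (integrable_const _)

theorem semiDual_eq_sub_integral_logSumExp (K d : ℕ) (σ : ℝ) (α : Fin K → ℝ)
    (Q : Measure (EuclideanSpace ℝ (Fin d))) (θ : Fin K → EuclideanSpace ℝ (Fin d))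
    (ω : Fin K → ℝ) :
    semiDual K d σ α Q θ ω
      = ∑ k, α k * ω k - ∫ y, logSumExp (fun k => α k * gaussDen d σ (θ k) y) ω ∂Q := by
  simp only [semiDual, logSumExp, mul_right_comm (α _) (Real.exp _)]

theorem strictConcaveOn_semiDual {K d : ℕ} {σ : ℝ} (hσ : σ ≠ 0) {α : Fin K → ℝ}
    (hα : ∀ k, 0 < α k) {Q : Measure (EuclideanSpace ℝ (Fin d))} [IsFiniteMeasure Q] [NeZero Q]
    (hQ : Integrable (fun y => ‖y‖ ^ 2) Q) (θ : Fin K → EuclideanSpace ℝ (Fin d)) (k₀ : Fin K) :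
    StrictConcaveOn ℝ {ω | ω k₀ = 0} (semiDual K d σ α Q θ) := by
  have hintegral := strictConvexOn_integral (μ := Q)
    (fun y => strictConvexOn_logSumExp (fun k => mul_pos (hα k) (gaussDen_pos hσ (θ k) y)) k₀)
    (fun ω _ => integrable_logSumExp_gaussDen hσ hα hQ θ ω k₀)
  refine ((Fintype.linearCombination ℝ α).concaveOn hintegral.1).add_strictConcaveOn
    hintegral.neg |>.congr fun ω _ => ?_
  simp [semiDual_eq_sub_integral_logSumExp, Fintype.linearCombination_apply, mul_comm,
    sub_eq_add_neg]

/-- for each fixed `θ`, the semi-dual objective `ω ↦ 𝓛̃(θ, ω)` is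
strictly concave on the hyperplane `{ω : ω_K = 0}`. -/
theorem semiDual_strictConcaveOn_hyperplane
    (K d : ℕ) (hK : 2 ≤ K) (σ : ℝ) (hσ : 0 < σ)
    (α : Fin K → ℝ) (hα : ∀ k, α k ∈ Set.Ioo (0 : ℝ) 1)
    (Q : Measure (EuclideanSpace ℝ (Fin d))) [IsProbabilityMeasure Q]
    (hQ : Integrable (fun y => ‖y‖ ^ 2) Q)
    (θ : Fin K → EuclideanSpace ℝ (Fin d))
    (ω ω' : Fin K → ℝ) (hne : ω ≠ ω')
    (hω : ω ⟨K - 1, by omega⟩ = 0) (hω' : ω' ⟨K - 1, by omega⟩ = 0)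
    (t : ℝ) (ht : t ∈ Set.Ioo (0 : ℝ) 1) :
    t * semiDual K d σ α Q θ ω + (1 - t) * semiDual K d σ α Q θ ω'
      < semiDual K d σ α Q θ (t • ω + (1 - t) • ω') :=
  (strictConcaveOn_semiDual hσ.ne' (fun k => (hα k).1) hQ θ ⟨K - 1, by omega⟩).2 hω hω' hne
    ht.1 (sub_pos.2 ht.2) (add_sub_cancel t 1)
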